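/- For a chemical reaction system Q = (X, R, C) with food set F and k inhibition pairs (X_1, R_1), …, (X_k, R_k), the number of distinct maximal u-RAFs is at most 2^k. -/
import Mathlib


/-- A chemical reaction system over molecule types `M` and reactions `R`:
each reaction has a finite set of reactants and products, and `catal x r`
means molecule x catalyzes reaction r. -/
structure CRS (M R : Type*) where
  reactants : R → Finset M
  products : R → Finset M
  catal : M → R → Prop

/-- cl_A(F): the smallest set W ⊇ F such that for every r ∈ A with ρ(r) ⊆ W,
π(r) ⊆ W. -/
def clo {M R : Type*} (Q : CRS M R) (F : Set M) (A : Set R) : Set M :=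
  ⋂₀ {W : Set M | F ⊆ W ∧
    ∀ r ∈ A, (↑(Q.reactants r) : Set M) ⊆ W → (↑(Q.products r) : Set M) ⊆ W}

/-- R' is an RAF: nonempty, each reaction is catalyzed by some molecule in the closure
of the food set under R', and all its reactants lie in that closure. -/
def IsRAF {M R : Type*} (Q : CRS M R) (F : Set M) (R' : Set R) : Prop :=
  R'.Nonempty ∧ ∀ r ∈ R',
    (∃ x ∈ clo Q F R', Q.catal x r) ∧ (↑(Q.reactants r) : Set M) ⊆ clo Q F R'

/-- supp(r) = ρ(r) ∪ π(r). -/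
def suppr {M R : Type*} (Q : CRS M R) (r : R) : Set M :=
  (↑(Q.reactants r) : Set M) ∪ (↑(Q.products r) : Set M)

/-- supp(R') = ∪_{r ∈ R'} (ρ(r) ∪ π(r)). -/
def suppR {M R : Type*} (Q : CRS M R) (R' : Set R) : Set M :=
  ⋃ r ∈ R', suppr Q r

/-- Condition (u-2): for every i, if R' meets R_i then supp(R') avoids X_i. -/
def CondU2 {M R : Type*} {k : ℕ} (Q : CRS M R)
    (Xi : Fin k → Set M) (Ri : Fin k → Set R) (R' : Set R) : Prop :=
  ∀ i : Fin k, (R' ∩ Ri i).Nonempty → suppR Q R' ∩ Xi i = ∅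

/-- A u-RAF is an RAF satisfying condition (u-2). -/
def IsURAF {M R : Type*} {k : ℕ} (Q : CRS M R) (F : Set M)
    (Xi : Fin k → Set M) (Ri : Fin k → Set R) (R' : Set R) : Prop :=
  IsRAF Q F R' ∧ CondU2 Q Xi Ri R'

/-- R^J = {r ∈ R : supp(r) ∩ X_j = ∅ for all j ∉ J}. -/
def RupJ {M R : Type*} {k : ℕ} (Q : CRS M R) (Xi : Fin k → Set M)
    (J : Set (Fin k)) : Set R :=
  {r | ∀ j ∉ J, suppr Q r ∩ Xi j = ∅}

/-- R_J = {r ∈ R : r ∉ R_j for all j ∈ J}. -/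
def RdownJ {R : Type*} {k : ℕ} (Ri : Fin k → Set R) (J : Set (Fin k)) : Set R :=
  {r | ∀ j ∈ J, r ∉ Ri j}

/-- s(R*): the union of all RAFs contained in R* (the maximal RAF within R*,
or ∅ if none exists). -/
def sMax {M R : Type*} (Q : CRS M R) (F : Set M) (Rs : Set R) : Set R :=
  ⋃₀ {A : Set R | A ⊆ Rs ∧ IsRAF Q F A}

theorem clo_mono {M R : Type*} (Q : CRS M R) (F : Set M) {A B : Set R} (h : A ⊆ B) :
    clo Q F A ⊆ clo Q F B := by
  apply Set.sInter_subset_sInter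
  rintro W ⟨hF, hW⟩
  exact ⟨hF, fun r hr => hW r (h hr)⟩

theorem IsRAF.union {M R : Type*} {Q : CRS M R} {F : Set M} {A B : Set R}
    (hA : IsRAF Q F A) (hB : IsRAF Q F B) : IsRAF Q F (A ∪ B) := by
  refine ⟨hA.1.mono Set.subset_union_left, fun r hr => ?_⟩
  rcases hr with h | h
  · obtain ⟨⟨x, hx, hc⟩, hre⟩ := hA.2 r h
    exact ⟨⟨x, clo_mono Q F Set.subset_union_left hx, hc⟩,
      hre.trans (clo_mono Q F Set.subset_union_left)⟩
  · obtain ⟨⟨x, hx, hc⟩, hre⟩ := hB.2 r h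
    exact ⟨⟨x, clo_mono Q F Set.subset_union_right hx, hc⟩,
      hre.trans (clo_mono Q F Set.subset_union_right)⟩

theorem suppR_union {M R : Type*} (Q : CRS M R) (A B : Set R) :
    suppR Q (A ∪ B) = suppR Q A ∪ suppR Q B := by
  simp only [suppR]
  exact Set.biUnion_union A B _

/-- The number of distinct maximal u-RAFs is at most 2^k. -/
theorem card_maximal_uRAFs_le {M R : Type*} [Fintype M] [Fintype R] {k : ℕ}
    (Q : CRS M R) (F : Set M) (Xi : Fin k → Set M) (Ri : Fin k → Set R) :
    Set.ncard {R' : Set R | IsURAF Q F Xi Ri R' ∧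
      ∀ R'' : Set R, IsURAF Q F Xi Ri R'' → R' ⊆ R'' → R'' = R'} ≤ 2 ^ k := by
  classical
  set S := {R' : Set R | IsURAF Q F Xi Ri R' ∧
      ∀ R'' : Set R, IsURAF Q F Xi Ri R'' → R' ⊆ R'' → R'' = R'} with hS
  have key : S.ncard ≤ (Set.univ : Set (Finset (Fin k))).ncard := by
    apply Set.ncard_le_ncard_of_injOn
      (fun R' => Finset.univ.filter (fun i => (suppR Q R' ∩ Xi i).Nonempty))
    · intro a _; exact Set.mem_univ _
    · intro A hA B hB hfeq
      have hmem : ∀ i : Fin k, (suppR Q A ∩ Xi i).Nonempty ↔ (suppR Q B ∩ Xi i).Nonempty := by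
        simp only [Finset.ext_iff, Finset.mem_filter, Finset.mem_univ, true_and] at hfeq
        exact hfeq
      -- A ∪ B is a u-RAF
      have hunion : IsURAF Q F Xi Ri (A ∪ B) := by
        refine ⟨hA.1.1.union hB.1.1, ?_⟩
        intro i hi
        have hemptyA : suppR Q A ∩ Xi i = ∅ ∧ suppR Q B ∩ Xi i = ∅ := by
          obtain ⟨r, hr, hri⟩ := hi
          rcases hr with hr | hr
          · have hAe : suppR Q A ∩ Xi i = ∅ := hA.1.2 i ⟨r, hr, hri⟩
            have hBe : suppR Q B ∩ Xi i = ∅ := by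
              rw [← Set.not_nonempty_iff_eq_empty] at hAe ⊢
              exact fun h => hAe ((hmem i).mpr h)
            exact ⟨hAe, hBe⟩
          · have hBe : suppR Q B ∩ Xi i = ∅ := hB.1.2 i ⟨r, hr, hri⟩
            have hAe : suppR Q A ∩ Xi i = ∅ := by
              rw [← Set.not_nonempty_iff_eq_empty] at hBe ⊢
              exact fun h => hBe ((hmem i).mp h)
            exact ⟨hAe, hBe⟩
        rw [suppR_union, Set.union_inter_distrib_right, hemptyA.1, hemptyA.2,
          Set.union_empty]
      have h1 : A ∪ B = A := hA.2 _ hunion Set.subset_union_left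
      have h2 : A ∪ B = B := hB.2 _ hunion Set.subset_union_right
      exact h1.symm.trans h2
  calc S.ncard ≤ (Set.univ : Set (Finset (Fin k))).ncard := key
    _ = 2 ^ k := by
        rw [Set.ncard_univ, Nat.card_eq_fintype_card, Fintype.card_finset, Fintype.card_fin]
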